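/- arXiv:1909.01061 — 4 statements merged into one kernel-verified Lean document; each statement's English description precedes it below -/
import Mathlib

section
/- Let Ξ and 𝔖 be two subsets of ℝ, and let k > j ≥ 0 be integers. If Ξ has Fuller order at least k and 𝔖 has Fuller order at most j, then the set difference Ξ \ 𝔖 has Fuller order at least k − j − 1. -/
/-- The set of isolated points of a subset of `ℝ`: points of the set having a
neighborhood whose intersection with the set is just that point. -/
def isolatedPoints (X : Set ℝ) : Set ℝ :=
  {x ∈ X | ∃ U ∈ nhds x, U ∩ X = {x}}

/-- `fullerResidual X j = X \ (X₀ ∪ … ∪ X_{j-1})`, where `X_i` are the iterated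
sets of isolated points. -/
def fullerResidual (X : Set ℝ) : ℕ → Set ℝ
  | 0 => X
  | n + 1 => fullerResidual X n \ isolatedPoints (fullerResidual X n)

/-- `fullerLayer X j = X_j`, the set of isolated points of `X \ (X₀ ∪ … ∪ X_{j-1})`. -/
def fullerLayer (X : Set ℝ) (n : ℕ) : Set ℝ :=
  isolatedPoints (fullerResidual X n)

/-!
Write `A'` for the derived set and `r A = A ∩ A'` (`relDerivedSet`), so that the `n`-th
Fuller residual is `r^[n]`. If `D` is discrete (`r D = ∅`), every point of `r (A ∪ D)`
outside `r A` lies in `A ∩ D'` or in `D ∩ A'`; the set of these points has derived set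
inside `A' ∩ D'`, which it misses, so it is discrete too. Hence adding a discrete set raises
the vanishing index of `r^[n]` by at most one, and peeling a set `B` with `r^[b] B = ∅` into
its `b` layers of isolated points gives `r^[a + b] (A ∪ B) = ∅` whenever `r^[a] A = ∅`.
Applied to `Ξ ⊆ (Ξ \ 𝔖) ∪ 𝔖` this is the theorem.
-/

open Set

section DerivedSet

variable {X : Type*} [TopologicalSpace X]

lemma derivedSet_derivedSet_subset [T1Space X] (A : Set X) :
    derivedSet (derivedSet A) ⊆ derivedSet A :=
  (isClosed_iff_derivedSet_subset _).mp (isClosed_derivedSet A)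

lemma derivedSet_inter_derivedSet_subset [T1Space X] (A B : Set X) :
    derivedSet (A ∩ derivedSet B) ⊆ derivedSet A ∩ derivedSet B :=
  subset_inter (derivedSet_mono _ _ inter_subset_left)
    ((derivedSet_mono _ _ inter_subset_right).trans (derivedSet_derivedSet_subset B))

lemma relDerivedSet_sdiff_relDerivedSet_eq_empty (B : Set X) :
    relDerivedSet (B \ relDerivedSet B) = ∅ := by
  have hB : B \ relDerivedSet B = B \ derivedSet B := by
    rw [relDerivedSet_apply, sdiff_inter_self_eq_sdiff]
  rw [relDerivedSet_apply, hB, eq_empty_iff_forall_notMem]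
  rintro x ⟨hx', -, hx⟩
  exact hx (derivedSet_mono _ _ sdiff_subset hx')

lemma relDerivedSet_union_sdiff_relDerivedSet_eq_empty [T1Space X] {A D : Set X}
    (hD : relDerivedSet D = ∅) :
    relDerivedSet (relDerivedSet (A ∪ D) \ relDerivedSet A) = ∅ := by
  set N := relDerivedSet (A ∪ D) \ relDerivedSet A
  have hD' : D ∩ derivedSet D = ∅ := by rwa [inter_comm]
  have hN : N ⊆ A ∩ derivedSet D ∪ D ∩ derivedSet A := by
    rintro x ⟨⟨hx', hx⟩, hxA⟩
    rw [derivedSet_union] at hx'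
    by_cases hA : x ∈ A
    · exact .inl ⟨hA, hx'.resolve_left fun h ↦ hxA ⟨h, hA⟩⟩
    · have hxD : x ∈ D := hx.resolve_left hA
      exact .inr ⟨hxD, hx'.resolve_right fun h ↦ hD'.subset ⟨hxD, h⟩⟩
  have hN' : derivedSet N ⊆ derivedSet A ∩ derivedSet D := by
    refine (derivedSet_mono _ _ hN).trans ?_
    rw [derivedSet_union]
    exact union_subset (derivedSet_inter_derivedSet_subset A D)
      (inter_comm (derivedSet D) _ ▸ derivedSet_inter_derivedSet_subset D A)
  rw [relDerivedSet_apply, eq_empty_iff_forall_notMem]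
  rintro x ⟨hx', hx⟩
  rcases hN hx with ⟨hA, -⟩ | ⟨hxD, -⟩
  · exact hx.2 ⟨(hN' hx').1, hA⟩
  · exact hD'.subset ⟨hxD, (hN' hx').2⟩

lemma relDerivedSet_iterate_union_discrete_eq_empty [T1Space X] (a : ℕ) {A D : Set X}
    (hA : (⇑relDerivedSet)^[a] A = ∅) (hD : relDerivedSet D = ∅) :
    (⇑relDerivedSet)^[a + 1] (A ∪ D) = ∅ := by
  induction a generalizing A D with
  | zero => simpa [show A = ∅ from hA] using hD
  | succ a ih =>
    have hsplit : relDerivedSet (A ∪ D) ⊆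
        relDerivedSet A ∪ (relDerivedSet (A ∪ D) \ relDerivedSet A) := by
      rw [union_sdiff_self]
      exact subset_union_right
    have hrA : (⇑relDerivedSet)^[a] (relDerivedSet A) = ∅ := by
      rwa [← Function.iterate_succ_apply]
    rw [← subset_empty_iff, Function.iterate_succ_apply, ← ih hrA
      (relDerivedSet_union_sdiff_relDerivedSet_eq_empty hD)]
    exact relDerivedSet.monotone.iterate _ hsplit

lemma relDerivedSet_iterate_union_eq_empty [T1Space X] {a b : ℕ} {A B : Set X}
    (hA : (⇑relDerivedSet)^[a] A = ∅) (hB : (⇑relDerivedSet)^[b] B = ∅) :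
    (⇑relDerivedSet)^[a + b] (A ∪ B) = ∅ := by
  induction b generalizing a A B with
  | zero => simpa [show B = ∅ from hB] using hA
  | succ b ih =>
    have hsplit : A ∪ B ⊆ (A ∪ (B \ relDerivedSet B)) ∪ relDerivedSet B := by
      rw [union_assoc, sdiff_union_self]
      exact union_subset_union_right A subset_union_left
    have hAB := ih (relDerivedSet_iterate_union_discrete_eq_empty a hA
      (relDerivedSet_sdiff_relDerivedSet_eq_empty B)) (by rwa [← Function.iterate_succ_apply])
    rw [← subset_empty_iff, ← hAB, show a + (b + 1) = a + 1 + b by omega]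
    exact relDerivedSet.monotone.iterate _ hsplit

end DerivedSet

lemma isolatedPoints_eq_sdiff_derivedSet (S : Set ℝ) :
    isolatedPoints S = S \ derivedSet S := by
  ext x
  simp only [isolatedPoints, mem_sdiff, mem_ofPred_eq, mem_derivedSet, accPt_iff_nhds,
    and_congr_right_iff]
  intro hx
  push Not
  refine ⟨fun ⟨U, hU, hUS⟩ ↦ ⟨U, hU, fun y hy ↦ (hUS ▸ hy : y ∈ ({x} : Set ℝ))⟩,
    fun ⟨U, hU, hUS⟩ ↦ ⟨U, hU, subset_antisymm (fun y hy ↦ hUS y hy) ?_⟩⟩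
  rintro y rfl
  exact ⟨mem_of_mem_nhds hU, hx⟩

lemma fullerResidual_eq_iterate (S : Set ℝ) (n : ℕ) :
    fullerResidual S n = (⇑relDerivedSet)^[n] S := by
  induction n with
  | zero => rfl
  | succ n ih =>
    rw [Function.iterate_succ_apply', ← ih, fullerResidual, isolatedPoints_eq_sdiff_derivedSet,
      sdiff_sdiff_right_self, relDerivedSet_apply, inter_comm]

lemma fullerResidual_eq_sdiff (S : Set ℝ) (n : ℕ) :
    fullerResidual S n = S \ ⋃ i ∈ Finset.range n, fullerLayer S i := by
  induction n with
  | zero => simp [fullerResidual]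
  | succ n ih =>
    rw [Finset.range_add_one, Finset.set_biUnion_insert, union_comm, ← sdiff_sdiff, ← ih]
    rfl

/-- If `Ξ` has Fuller order at least `k` and `𝔖` has Fuller order at most `j`,
with `k > j ≥ 0`, then `Ξ \ 𝔖` has Fuller order at least `k - j - 1`. -/
theorem fuller_order_diff (Ξ 𝔖 : Set ℝ) (k j : ℕ) (hkj : j < k)
    (hΞ : (Ξ \ ⋃ i ∈ Finset.range k, fullerLayer Ξ i).Nonempty)
    (h𝔖 : 𝔖 = ⋃ i ∈ Finset.range (j + 1), fullerLayer 𝔖 i) :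
    ((Ξ \ 𝔖) \ ⋃ i ∈ Finset.range (k - j - 1), fullerLayer (Ξ \ 𝔖) i).Nonempty := by
  simp only [← fullerResidual_eq_sdiff, fullerResidual_eq_iterate] at hΞ ⊢
  have h𝔖 : (⇑relDerivedSet)^[j + 1] 𝔖 = ∅ := by
    rw [← fullerResidual_eq_iterate, fullerResidual_eq_sdiff, ← h𝔖, sdiff_self]
  rw [nonempty_iff_ne_empty] at hΞ ⊢
  intro hdiff
  have hunion := relDerivedSet_iterate_union_eq_empty hdiff h𝔖
  rw [sdiff_union_self, show k - j - 1 + (j + 1) = k by omega] at hunion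
  exact hΞ (subset_empty_iff.mp
    (hunion ▸ relDerivedSet.monotone.iterate k subset_union_left))
end

section
/- Let k ≥ 1 and j ≥ 0 be integers and let Ξ ⊆ ℝ be the union of k sets Ξ¹, …, Ξᵏ. If every Ξⁱ, i ∈ {1, …, k}, has Fuller order at most j, then Ξ has Fuller order at most k(j+1). -/
open Set Filter Topology

theorem mem_isolatedPoints_iff {S : Set ℝ} {x : ℝ} :
    x ∈ isolatedPoints S ↔ x ∈ S ∧ ∀ᶠ y in 𝓝 x, y ∈ S → y = x := by
  refine ⟨fun ⟨hx, U, hU, hUS⟩ => ⟨hx, ?_⟩, fun ⟨hx, h⟩ => ⟨hx, _, h, ?_⟩⟩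
  · filter_upwards [hU] with y hyU hyS
    exact (hUS ▸ ⟨hyU, hyS⟩ : y ∈ ({x} : Set ℝ))
  · ext y
    exact ⟨fun ⟨hy, hyS⟩ => hy hyS, by rintro rfl; exact ⟨fun _ => rfl, hx⟩⟩

theorem isolatedPoints_subset (S : Set ℝ) : isolatedPoints S ⊆ S := fun _ hx => hx.1

theorem isolatedPoints_inter_of_isOpen {S U : Set ℝ} (hU : IsOpen U) :
    isolatedPoints (S ∩ U) = isolatedPoints S ∩ U := by
  ext x
  simp only [mem_inter_iff, mem_isolatedPoints_iff]
  constructor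
  · rintro ⟨⟨hxS, hxU⟩, h⟩
    refine ⟨⟨hxS, ?_⟩, hxU⟩
    filter_upwards [h, hU.mem_nhds hxU] with y hy hyU hyS using hy ⟨hyS, hyU⟩
  · rintro ⟨⟨hxS, h⟩, hxU⟩
    exact ⟨⟨hxS, hxU⟩, h.mono fun y hy hyS => hy hyS.1⟩

theorem fullerResidual_subset (X : Set ℝ) : ∀ n, fullerResidual X n ⊆ X
  | 0 => subset_rfl
  | n + 1 => sdiff_subset.trans (fullerResidual_subset X n)

theorem fullerResidual_antitone (X : Set ℝ) : Antitone (fullerResidual X) :=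
  antitone_nat_of_succ_le fun _ => sdiff_subset

theorem fullerResidual_inter_of_isOpen {X U : Set ℝ} (hU : IsOpen U) :
    ∀ n, fullerResidual (X ∩ U) n = fullerResidual X n ∩ U
  | 0 => rfl
  | n + 1 => by
    rw [fullerResidual, fullerResidual, fullerResidual_inter_of_isOpen hU n,
      isolatedPoints_inter_of_isOpen hU, inter_sdiff_distrib_right]

theorem fullerResidual_eq_diff (X : Set ℝ) :
    ∀ n, fullerResidual X n = X \ ⋃ l ∈ Finset.range n, fullerLayer X l
  | 0 => by simp [fullerResidual]
  | n + 1 => by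
    change fullerResidual X n \ fullerLayer X n = _
    rw [fullerResidual_eq_diff X n, Finset.range_add_one, Finset.set_biUnion_insert, sdiff_sdiff,
      union_comm]

theorem eq_biUnion_fullerLayer_iff {X : Set ℝ} {n : ℕ} :
    X = ⋃ l ∈ Finset.range n, fullerLayer X l ↔ fullerResidual X n = ∅ := by
  rw [fullerResidual_eq_diff, sdiff_eq_empty]
  refine ⟨fun h => h.le, fun h => h.antisymm (iUnion₂_subset fun l _ => ?_)⟩
  exact (isolatedPoints_subset _).trans (fullerResidual_subset X l)

theorem exists_lt_mem_isolatedPoints_fullerResidual {A : Set ℝ} {x : ℝ} {a : ℕ} (hxA : x ∈ A)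
    (hx : x ∉ fullerResidual A a) : ∃ m < a, x ∈ isolatedPoints (fullerResidual A m) := by
  induction a with
  | zero => exact absurd hxA hx
  | succ a ih =>
    by_cases hxa : x ∈ fullerResidual A a
    · exact ⟨a, a.lt_succ_self, not_not.mp fun h => hx ⟨hxa, h⟩⟩
    · obtain ⟨m, hm, hxm⟩ := ih hxa
      exact ⟨m, hm.trans a.lt_succ_self, hxm⟩

theorem mem_isolatedPoints_fullerResidual_union {A B : Set ℝ} {a b n : ℕ} (hab : a + b = n + 1)
    (ih : ∀ m < a, ∀ A' B' : Set ℝ, fullerResidual A' m = ∅ → fullerResidual B' b = ∅ →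
      fullerResidual (A' ∪ B') (m + b) = ∅)
    (hA : fullerResidual A a = ∅) (hB : fullerResidual B b = ∅) {x : ℝ}
    (hx : x ∈ fullerResidual (A ∪ B) n) (hxA : x ∈ A) :
    x ∈ isolatedPoints (fullerResidual (A ∪ B) n) := by
  obtain ⟨m, hma, hxm⟩ :=
    exists_lt_mem_isolatedPoints_fullerResidual hxA (hA ▸ notMem_empty x)
  obtain ⟨V, hVm, hVo, hxV⟩ := eventually_nhds_iff.mp (mem_isolatedPoints_iff.mp hxm).2
  have hWo : IsOpen (V \ {x}) := hVo.sdiff isClosed_singleton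
  have hAW : fullerResidual (A ∩ (V \ {x})) m = ∅ := by
    rw [fullerResidual_inter_of_isOpen hWo, eq_empty_iff_forall_notMem]
    rintro y ⟨hy, hyV, hyx⟩
    exact hyx (hVm y hyV hy)
  have hBW : fullerResidual (B ∩ (V \ {x})) b = ∅ := by
    rw [fullerResidual_inter_of_isOpen hWo, hB, empty_inter]
  have hW : fullerResidual (A ∪ B) n ∩ (V \ {x}) = ∅ := by
    have h := ih m hma _ _ hAW hBW
    rw [← union_inter_distrib_right, fullerResidual_inter_of_isOpen hWo] at h
    exact subset_eq_empty (inter_subset_inter_left _ (fullerResidual_antitone _ (by omega))) h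
  refine mem_isolatedPoints_iff.mpr ⟨hx, ?_⟩
  filter_upwards [hVo.mem_nhds hxV] with y hyV hy
  by_contra hyx
  exact eq_empty_iff_forall_notMem.mp hW y ⟨hy, hyV, hyx⟩

theorem fullerResidual_union_eq_empty {A B : Set ℝ} {a b : ℕ} (hA : fullerResidual A a = ∅)
    (hB : fullerResidual B b = ∅) : fullerResidual (A ∪ B) (a + b) = ∅ := by
  induction h : a + b using Nat.strong_induction_on generalizing A B a b with
  | _ N ih =>
  cases N with
  | zero =>
    obtain ⟨rfl, rfl⟩ : a = 0 ∧ b = 0 := by omega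
    exact union_empty_iff.mpr ⟨hA, hB⟩
  | succ n =>
    refine sdiff_eq_empty.mpr fun x hx => ?_
    rcases fullerResidual_subset _ _ hx with hxA | hxB
    · exact mem_isolatedPoints_fullerResidual_union h
        (fun m hm A' B' hA' hB' => ih (m + b) (by omega) hA' hB' rfl) hA hB hx hxA
    · rw [union_comm] at hx ⊢
      exact mem_isolatedPoints_fullerResidual_union (by omega)
        (fun m hm A' B' hA' hB' => ih (m + a) (by omega) hA' hB' rfl) hB hA hx hxB

theorem fullerResidual_biUnion_eq_empty {ι : Type*} [DecidableEq ι] {F : ι → Set ℝ} {a : ℕ}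
    (s : Finset ι) (h : ∀ i ∈ s, fullerResidual (F i) a = ∅) :
    fullerResidual (⋃ i ∈ s, F i) (s.card * a) = ∅ := by
  induction s using Finset.induction_on with
  | empty => simp [fullerResidual]
  | insert i s hi ih =>
    rw [Finset.set_biUnion_insert, Finset.card_insert_of_notMem hi, Nat.succ_mul, add_comm]
    exact fullerResidual_union_eq_empty (h i (Finset.mem_insert_self i s))
      (ih fun i hi => h i (Finset.mem_insert_of_mem hi))

theorem fuller_order_union_general (k j : ℕ) (F : Fin k → Set ℝ) (Ξ : Set ℝ)
    (hΞ : Ξ = ⋃ i, F i)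
    (hF : ∀ i, F i = ⋃ l ∈ Finset.range (j + 1), fullerLayer (F i) l) :
    Ξ = ⋃ l ∈ Finset.range (k * (j + 1) + 1), fullerLayer Ξ l := by
  have hres : fullerResidual Ξ (k * (j + 1)) = ∅ := by
    simpa [hΞ] using fullerResidual_biUnion_eq_empty Finset.univ
      fun i _ => eq_biUnion_fullerLayer_iff.mp (hF i)
  exact eq_biUnion_fullerLayer_iff.mpr
    (subset_eq_empty (fullerResidual_antitone Ξ (Nat.le_succ _)) hres)

/-- If `Ξ` is the union of `k ≥ 1` sets each of Fuller order at most `j`, then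
`Ξ` has Fuller order at most `k * (j + 1)`. -/
theorem fuller_order_union (k j : ℕ) (hk : 1 ≤ k) (F : Fin k → Set ℝ) (Ξ : Set ℝ)
    (hΞ : Ξ = ⋃ i, F i)
    (hF : ∀ i, F i = ⋃ l ∈ Finset.range (j + 1), fullerLayer (F i) l) :
    Ξ = ⋃ l ∈ Finset.range (k * (j + 1) + 1), fullerLayer Ξ l :=
  fuller_order_union_general k j F Ξ hΞ hF
end

section
/- For every m ≥ 1 there exist a multivariate polynomial P, homogeneous of degree m, and a family of multivariate polynomials Q_{ij} (1 ≤ i, j ≤ 2m), each homogeneous of degree m − 1, all in the entries of a 2m × 2m matrix and with real coefficients, such that for every skew-symmetric A ∈ M_{2m}(ℝ): (1) det A = (P(A))²; (2) the matrix Q(A) with (i,j) entry Q_{ij}(A) is skew-symmetric; and (3) Q(A) · A = P(A) · Id_{2m}. -/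
/-!
Let `Y` be the generic skew-symmetric matrix, with entries in `R = ℝ[xᵢⱼ]`. Over the fraction
field of `R`, expanding along a nonzero entry and taking a Schur complement shows by induction that
the determinant of a skew-symmetric matrix is a square; as `R` is integrally closed,
`det Y = P ²` with `P ∈ R`. For `i ≠ j`, Jacobi's identity for the `{i, j}` minor of the
skew-symmetric matrix `adj Y` reads `adj(Y)ᵢⱼ ² = det Y · det Y'`, where `Y'` deletes rows and
columns `i, j`; so `P ² ∣ adj(Y)ᵢⱼ ²`, hence `P ∣ adj(Y)ᵢⱼ`, and `Q := adj(Y) / P`. Cancelling `P`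
in the identities for `adj Y` gives `Qᵀ = -Q` and `Q Y = P • 1`; degrees are additive on the
homogeneous products `P ²` and `P Qᵢⱼ`; and everything specializes to a skew-symmetric `A`
because `Y` evaluates to `A`.
-/

open Matrix MvPolynomial

namespace MvPolynomial

variable {σ R : Type*} [CommRing R] {p q : MvPolynomial σ R} {m n : ℕ}

lemma order_coe_le_totalDegree (hp : p ≠ 0) :
    (p : MvPowerSeries σ R).order ≤ p.totalDegree := by
  obtain ⟨d, hd, hsup⟩ := Finset.exists_mem_eq_sup _ (support_nonempty.mpr hp)
    fun s : σ →₀ ℕ => s.sum fun _ e => e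
  rw [totalDegree, hsup]
  exact MvPowerSeries.order_le (by rwa [coeff_coe, ← mem_support_iff])

lemma IsHomogeneous.le_order_coe (h : p.IsHomogeneous n) :
    (n : ℕ∞) ≤ (p : MvPowerSeries σ R).order :=
  MvPowerSeries.le_order fun d hd => by
    rw [coeff_coe]
    exact h.coeff_eq_zero (by rintro rfl; exact lt_irrefl _ hd)

lemma isHomogeneous_totalDegree_of_totalDegree_le_order
    (h : (p.totalDegree : ℕ∞) ≤ (p : MvPowerSeries σ R).order) :
    p.IsHomogeneous p.totalDegree := by
  intro d hd
  have hle : d.degree ≤ p.totalDegree := le_totalDegree (mem_support_iff.mpr hd)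
  have hge := h.trans (MvPowerSeries.order_le (d := d) (by rwa [coeff_coe]))
  simpa [Finsupp.degree_eq_weight_one, Pi.one_def] using le_antisymm hle (by exact_mod_cast hge)

/-- Both the lowest degree (`order`) and the highest degree (`totalDegree`) are additive, so the
two must agree on each factor of a homogeneous product. -/
lemma IsHomogeneous.isHomogeneous_totalDegree_of_mul [IsDomain R] (h : (p * q).IsHomogeneous n)
    (hp : p ≠ 0) (hq : q ≠ 0) : p.IsHomogeneous p.totalDegree := by
  apply isHomogeneous_totalDegree_of_totalDegree_le_order
  have hn : p.totalDegree + q.totalDegree = n := by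
    rw [← totalDegree_mul_of_isDomain hp hq, h.totalDegree (mul_ne_zero hp hq)]
  have hord := h.le_order_coe
  rw [coe_mul, MvPowerSeries.order_mul] at hord
  have hp' := order_coe_le_totalDegree hp
  have hq' := order_coe_le_totalDegree hq
  lift (p : MvPowerSeries σ R).order to ℕ using (hp'.trans_lt (ENat.natCast_lt_top _)).ne with a
  lift (q : MvPowerSeries σ R).order to ℕ using (hq'.trans_lt (ENat.natCast_lt_top _)).ne with b
  norm_cast at *
  omega

lemma IsHomogeneous.of_mul_left [IsDomain R] (hp : p.IsHomogeneous m) (hp0 : p ≠ 0)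
    (hpq : (p * q).IsHomogeneous (m + n)) : q.IsHomogeneous n := by
  rcases eq_or_ne q 0 with rfl | hq0
  · exact isHomogeneous_zero _ _ _
  have hq := (mul_comm p q ▸ hpq).isHomogeneous_totalDegree_of_mul hq0 hp0
  have := (hp.mul hq).inj_right hpq (mul_ne_zero hp0 hq0)
  exact (by omega : q.totalDegree = n) ▸ hq

lemma IsHomogeneous.of_sq [IsDomain R] (h : (p ^ 2).IsHomogeneous (2 * n)) :
    p.IsHomogeneous n := by
  rcases eq_or_ne p 0 with rfl | hp0
  · exact isHomogeneous_zero _ _ _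
  rw [sq] at h
  have hp := h.isHomogeneous_totalDegree_of_mul hp0 hp0
  have := (hp.mul hp).inj_right h (mul_ne_zero hp0 hp0)
  exact (by omega : p.totalDegree = n) ▸ hp

variable {ι : Type*} [Fintype ι] [DecidableEq ι]

lemma isHomogeneous_det {M : Matrix ι ι (MvPolynomial σ R)} {d : ι → ℕ}
    (h : ∀ i j, (M i j).IsHomogeneous (d i)) : M.det.IsHomogeneous (∑ i, d i) := by
  rw [det_apply]
  refine IsHomogeneous.sum _ _ _ fun τ _ => ?_
  rw [Units.smul_def, ← mem_homogeneousSubmodule]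
  refine zsmul_mem ((mem_homogeneousSubmodule _ _).mpr ?_) _
  rw [← Equiv.sum_comp τ d]
  exact IsHomogeneous.prod _ _ _ fun i _ => h (τ i) i

lemma isHomogeneous_adjugate_apply {M : Matrix ι ι (MvPolynomial σ R)}
    (h : ∀ i j, (M i j).IsHomogeneous 1) (i j : ι) :
    (M.adjugate i j).IsHomogeneous (Fintype.card ι - 1) := by
  have hrow : ∀ r c, ((M.updateRow j (Pi.single i 1)) r c).IsHomogeneous
      (if r = j then 0 else 1) := by
    intro r c
    by_cases hr : r = j
    · rw [hr, updateRow_self, if_pos rfl, Pi.single_apply]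
      split_ifs
      exacts [isHomogeneous_one _ _, isHomogeneous_zero _ _ _]
    · rw [updateRow_ne hr, if_neg hr]
      exact h r c
  simpa [Finset.sum_ite, Finset.filter_ne', Finset.card_erase_of_mem, adjugate_apply]
    using isHomogeneous_det hrow

end MvPolynomial

lemma IsIntegrallyClosed.isSquare_of_isSquare_algebraMap {R K : Type*} [CommRing R] [IsDomain R]
    [IsIntegrallyClosed R] [Field K] [Algebra R K] [IsFractionRing R K] {r : R}
    (h : IsSquare (algebraMap R K r)) : IsSquare r := by
  obtain ⟨x, hx⟩ := h
  obtain ⟨y, rfl⟩ := IsIntegrallyClosed.algebraMap_eq_of_integral (R := R) (x := x)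
    ⟨Polynomial.X ^ 2 - Polynomial.C r, Polynomial.monic_X_pow_sub_C r two_ne_zero,
      by simp [sq, hx]⟩
  exact ⟨y, IsFractionRing.injective R K (by simpa using hx)⟩

def Equiv.pairSumCompl {ι : Type*} [DecidableEq ι] {i j : ι} (hij : i ≠ j) :
    Fin 2 ⊕ {x // x ≠ i ∧ x ≠ j} ≃ ι where
  toFun := Sum.elim ![i, j] Subtype.val
  invFun x := if hi : x = i then .inl 0 else if hj : x = j then .inl 1 else .inr ⟨x, hi, hj⟩
  left_inv := by
    rintro (a | ⟨x, hi, hj⟩)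
    · fin_cases a <;> simp [hij.symm]
    · simp [hi, hj]
  right_inv x := by
    by_cases hi : x = i
    · simp [hi]
    · by_cases hj : x = j <;> simp [hi, hj, hij.symm]

namespace Matrix

section

variable {R : Type*} [CommRing R]

/-- A case of Jacobi's complementary minor identity: multiply `M` by the block lower triangular
matrix with diagonal blocks `N₁₁` and `1` and first block column that of `N`. -/
lemma det_mul_det_toBlocks₁₁_of_mul_eq_smul_one {m n : Type*} [Fintype m] [Fintype n]
    [DecidableEq m] [DecidableEq n] {M N : Matrix (m ⊕ n) (m ⊕ n) R} {c : R} (h : M * N = c • 1) :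
    M.det * N.toBlocks₁₁.det = c ^ Fintype.card m * M.toBlocks₂₂.det := by
  have key : M * fromBlocks N.toBlocks₁₁ 0 N.toBlocks₂₁ 1
      = fromBlocks (c • 1) M.toBlocks₁₂ 0 M.toBlocks₂₂ := by
    rw [← fromBlocks_toBlocks M, ← fromBlocks_toBlocks N, fromBlocks_multiply, ← fromBlocks_one,
      fromBlocks_smul, fromBlocks_inj] at h
    conv_lhs => rw [← fromBlocks_toBlocks M]
    simp [fromBlocks_multiply, h.1, h.2.2.1]
  simpa [det_fromBlocks_zero₁₂, det_fromBlocks_zero₂₁, det_smul] using congrArg det key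

variable {ι : Type*} {A : Matrix ι ι R}

lemma transpose_adjugate_of_transpose_eq_neg [Fintype ι] [DecidableEq ι] (hA : Aᵀ = -A)
    (hι : Even (Fintype.card ι)) : A.adjugateᵀ = -A.adjugate := by
  ext i j
  have hodd : Odd (Fintype.card ι - 1) :=
    Nat.Even.sub_odd (Fintype.card_pos_iff.mpr ⟨i⟩) hι odd_one
  rw [adjugate_transpose, hA, ← neg_one_smul R A, adjugate_smul, hodd.neg_one_pow, neg_one_smul]

lemma transpose_nonsing_inv_of_transpose_eq_neg [Fintype ι] [DecidableEq ι] (hA : Aᵀ = -A)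
    (h : IsUnit A.det) : A⁻¹ᵀ = -A⁻¹ := by
  rw [transpose_nonsing_inv, hA]
  exact inv_eq_left_inv (by rw [neg_mul_neg, nonsing_inv_mul _ h])

lemma transpose_schur_of_transpose_eq_neg {m n : Type*} [Fintype m] [DecidableEq m]
    {M : Matrix (m ⊕ n) (m ⊕ n) R} (hM : Mᵀ = -M) (h : IsUnit M.toBlocks₁₁.det) :
    (M.toBlocks₂₂ - M.toBlocks₂₁ * M.toBlocks₁₁⁻¹ * M.toBlocks₁₂)ᵀ
      = -(M.toBlocks₂₂ - M.toBlocks₂₁ * M.toBlocks₁₁⁻¹ * M.toBlocks₁₂) := by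
  rw [← fromBlocks_toBlocks M, fromBlocks_transpose, fromBlocks_neg, fromBlocks_inj] at hM
  obtain ⟨h₁₁, h₁₂, h₂₁, h₂₂⟩ := hM
  rw [transpose_sub, transpose_mul, transpose_mul, h₂₂, h₁₂, h₂₁,
    transpose_nonsing_inv_of_transpose_eq_neg h₁₁ h]
  simp only [Matrix.neg_mul, Matrix.mul_neg, neg_neg, Matrix.mul_assoc]
  abel

lemma exists_transpose_eq_neg_det_eq_one [Fintype ι] [DecidableEq ι]
    (hι : Even (Fintype.card ι)) :
    ∃ A : Matrix ι ι R, Aᵀ = -A ∧ A.det = 1 := by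
  obtain ⟨m, hm⟩ := hι
  let e : Fin 2 × Fin m ≃ ι := Fintype.equivOfCardEq (by simp [hm]; ring)
  refine ⟨reindex e e (blockDiagonal fun _ => !![0, 1; -1, 0]), ?_, by simp [det_blockDiagonal]⟩
  have hJ : (!![0, 1; -1, 0] : Matrix (Fin 2) (Fin 2) R)ᵀ = -!![0, 1; -1, 0] := by
    ext a b; fin_cases a <;> fin_cases b <;> simp
  rw [transpose_reindex, blockDiagonal_transpose, hJ, ← Pi.neg_def, blockDiagonal_neg]
  rfl

variable [IsAddTorsionFree R]

lemma diag_eq_zero_of_transpose_eq_neg (hA : Aᵀ = -A) (i : ι) : A i i = 0 :=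
  self_eq_neg.mp (congrFun₂ hA i i)

variable [DecidableEq ι]

lemma det_toBlocks₁₁_submatrix_pairSumCompl (hA : Aᵀ = -A) {i j : ι} (hij : i ≠ j) :
    (A.submatrix (Equiv.pairSumCompl hij) (Equiv.pairSumCompl hij)).toBlocks₁₁.det
      = A i j ^ 2 := by
  have hji : A j i = -A i j := congrFun₂ hA i j
  simp [det_fin_two, toBlocks₁₁, Equiv.pairSumCompl, diag_eq_zero_of_transpose_eq_neg hA, hji]
  ring

variable [Fintype ι]

lemma det_mul_sq_adjugate_apply_of_transpose_eq_neg (hA : Aᵀ = -A) (hι : Even (Fintype.card ι))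
    {i j : ι} (hij : i ≠ j) :
    A.det * A.adjugate i j ^ 2
      = A.det ^ 2 * (A.submatrix (↑) (↑) : Matrix {x // x ≠ i ∧ x ≠ j} _ R).det := by
  have h := det_mul_det_toBlocks₁₁_of_mul_eq_smul_one
    (mul_adjugate (A.submatrix (Equiv.pairSumCompl hij) (Equiv.pairSumCompl hij)))
  rwa [adjugate_submatrix_equiv_self, det_toBlocks₁₁_submatrix_pairSumCompl
    (transpose_adjugate_of_transpose_eq_neg hA hι) hij, det_submatrix_equiv_self,
    Fintype.card_fin] at h

lemma exists_det_eq_sq_mul_det_of_transpose_eq_neg {K : Type*} [Field K] [IsAddTorsionFree K]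
    {A : Matrix ι ι K} (hA : Aᵀ = -A) {i j : ι} (hij : A i j ≠ 0) :
    ∃ S : Matrix {x // x ≠ i ∧ x ≠ j} {x // x ≠ i ∧ x ≠ j} K,
      Sᵀ = -S ∧ A.det = A i j ^ 2 * S.det := by
  have hne : i ≠ j := by rintro rfl; exact hij (diag_eq_zero_of_transpose_eq_neg hA i)
  set M := A.submatrix (Equiv.pairSumCompl hne) (Equiv.pairSumCompl hne)
  have hM : Mᵀ = -M := by rw [transpose_submatrix, hA]; rfl
  have hdet : M.toBlocks₁₁.det = A i j ^ 2 := det_toBlocks₁₁_submatrix_pairSumCompl hA hne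
  have hunit : IsUnit M.toBlocks₁₁.det := by rw [hdet]; exact (pow_ne_zero 2 hij).isUnit
  let := M.toBlocks₁₁.invertibleOfIsUnitDet hunit
  refine ⟨_, transpose_schur_of_transpose_eq_neg hM hunit, ?_⟩
  have h := det_fromBlocks₁₁ M.toBlocks₁₁ M.toBlocks₁₂ M.toBlocks₂₁ M.toBlocks₂₂
  rwa [fromBlocks_toBlocks, det_submatrix_equiv_self, invOf_eq_nonsing_inv, hdet] at h

theorem isSquare_det_of_transpose_eq_neg {K : Type*} [Field K] [IsAddTorsionFree K]
    {A : Matrix ι ι K} (hA : Aᵀ = -A) : IsSquare A.det := by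
  induction hcard : Fintype.card ι using Nat.strong_induction_on generalizing ι with
  | _ n ih =>
  by_cases hA0 : A = 0
  · subst hA0
    cases isEmpty_or_nonempty ι <;> simp
  obtain ⟨i, j, hij⟩ : ∃ i j, A i j ≠ 0 := by
    by_contra! h
    exact hA0 (Matrix.ext h)
  obtain ⟨S, hS, hdet⟩ := exists_det_eq_sq_mul_det_of_transpose_eq_neg hA hij
  have hlt : Fintype.card {x // x ≠ i ∧ x ≠ j} < n :=
    hcard ▸ Fintype.card_subtype_lt (p := fun x => x ≠ i ∧ x ≠ j) (x := i) (by simp)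
  obtain ⟨s, hs⟩ := ih _ hlt hS rfl
  exact ⟨A i j * s, by rw [hdet, hs]; ring⟩

end

section

variable (ι : Type*) (k : Type*) [Field k]

/-- The factor `2⁻¹` makes it evaluate to `A` at every skew-symmetric `A`. -/
noncomputable def skewMvPolynomialX : Matrix ι ι (MvPolynomial (ι × ι) k) :=
  (2⁻¹ : k) • (mvPolynomialX ι ι k - (mvPolynomialX ι ι k)ᵀ)

variable {ι k}

lemma transpose_skewMvPolynomialX : (skewMvPolynomialX ι k)ᵀ = -skewMvPolynomialX ι k := by
  simp [skewMvPolynomialX, transpose_sub, smul_sub]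

lemma isHomogeneous_skewMvPolynomialX_apply (i j : ι) :
    (skewMvPolynomialX ι k i j).IsHomogeneous 1 := by
  rw [← mem_homogeneousSubmodule]
  exact Submodule.smul_mem _ _ (Submodule.sub_mem _ (isHomogeneous_X _ _) (isHomogeneous_X _ _))

lemma map_eval_skewMvPolynomialX [CharZero k] {A : Matrix ι ι k} (hA : Aᵀ = -A) :
    (skewMvPolynomialX ι k).map (eval fun p => A p.1 p.2) = A := by
  ext i j
  have hji : A j i = -A i j := congrFun₂ hA i j
  simp [skewMvPolynomialX, hji]
  ring

variable [Fintype ι] [DecidableEq ι] [CharZero k]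

lemma det_skewMvPolynomialX_ne_zero (hι : Even (Fintype.card ι)) :
    (skewMvPolynomialX ι k).det ≠ 0 := by
  obtain ⟨A, hA, hdet⟩ := exists_transpose_eq_neg_det_eq_one (R := k) hι
  intro h
  have := congrArg (eval fun p => A p.1 p.2) h
  rw [RingHom.map_det, RingHom.mapMatrix_apply, map_eval_skewMvPolynomialX hA, hdet] at this
  simp at this

lemma isSquare_det_skewMvPolynomialX : IsSquare (skewMvPolynomialX ι k).det := by
  apply IsIntegrallyClosed.isSquare_of_isSquare_algebraMap
    (K := FractionRing (MvPolynomial (ι × ι) k))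
  rw [RingHom.map_det, RingHom.mapMatrix_apply]
  apply isSquare_det_of_transpose_eq_neg
  rw [← transpose_map, transpose_skewMvPolynomialX, Matrix.map_neg _ (map_neg _)]

lemma dvd_adjugate_skewMvPolynomialX_apply (hι : Even (Fintype.card ι))
    {P : MvPolynomial (ι × ι) k} (hP : (skewMvPolynomialX ι k).det = P ^ 2) (i j : ι) :
    P ∣ (skewMvPolynomialX ι k).adjugate i j := by
  rcases eq_or_ne i j with rfl | hij
  · rw [diag_eq_zero_of_transpose_eq_neg
      (transpose_adjugate_of_transpose_eq_neg transpose_skewMvPolynomialX hι) i]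
    exact dvd_zero _
  have h := det_mul_sq_adjugate_apply_of_transpose_eq_neg
    (transpose_skewMvPolynomialX (k := k)) hι hij
  rw [sq (det _), mul_assoc, mul_right_inj' (det_skewMvPolynomialX_ne_zero hι), hP] at h
  exact (IsIntegrallyClosed.pow_dvd_pow_iff (R := MvPolynomial (ι × ι) k) two_ne_zero).mp
    ⟨_, h⟩

theorem exists_pfaffian_skewMvPolynomialX {m : ℕ} (hι : Fintype.card ι = 2 * m) :
    ∃ (P : MvPolynomial (ι × ι) k) (Q : Matrix ι ι (MvPolynomial (ι × ι) k)),
      P.IsHomogeneous m ∧ (∀ i j, (Q i j).IsHomogeneous (m - 1)) ∧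
      (skewMvPolynomialX ι k).det = P ^ 2 ∧ Qᵀ = -Q ∧ Q * skewMvPolynomialX ι k = P • 1 := by
  have hev : Even (Fintype.card ι) := ⟨m, by omega⟩
  obtain ⟨P, hP⟩ := isSquare_det_skewMvPolynomialX (ι := ι) (k := k)
  rw [← sq] at hP
  have hP0 : P ≠ 0 := by rintro rfl; exact det_skewMvPolynomialX_ne_zero hev (by simpa using hP)
  choose Q hQ using dvd_adjugate_skewMvPolynomialX_apply hev hP
  have hPQ : P • of Q = (skewMvPolynomialX ι k).adjugate := ext fun i j => (hQ i j).symm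
  have hcancel := smul_right_injective (Matrix ι ι (MvPolynomial (ι × ι) k)) hP0
  have hPhom : P.IsHomogeneous m := IsHomogeneous.of_sq <| hP ▸ hι ▸ by
    simpa using isHomogeneous_det fun i j => isHomogeneous_skewMvPolynomialX_apply (k := k) i j
  refine ⟨P, of Q, hPhom, fun i j => ?_, hP, hcancel ?_, hcancel ?_⟩
  · have hm : 0 < m := by have := Fintype.card_pos_iff.mpr ⟨i⟩; omega
    refine hPhom.of_mul_left hP0 ((hQ i j) ▸ ?_)
    convert isHomogeneous_adjugate_apply isHomogeneous_skewMvPolynomialX_apply i j using 1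
    omega
  · simp only [smul_neg, ← transpose_smul, hPQ,
      transpose_adjugate_of_transpose_eq_neg transpose_skewMvPolynomialX hev]
  · dsimp only
    rw [← Matrix.smul_mul, hPQ, adjugate_mul, hP, sq, smul_smul]

end

end Matrix

theorem exists_pfaffian_and_adjoint_pfaffian_general (m : ℕ) :
    ∃ (P : MvPolynomial (Fin (2 * m) × Fin (2 * m)) ℝ)
      (Q : Fin (2 * m) → Fin (2 * m) → MvPolynomial (Fin (2 * m) × Fin (2 * m)) ℝ),
      P.IsHomogeneous m ∧
      (∀ i j, (Q i j).IsHomogeneous (m - 1)) ∧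
      ∀ A : Matrix (Fin (2 * m)) (Fin (2 * m)) ℝ, Aᵀ = -A →
        A.det = (MvPolynomial.eval (fun p => A p.1 p.2) P) ^ 2 ∧
        (Matrix.of fun i j => MvPolynomial.eval (fun p => A p.1 p.2) (Q i j))ᵀ
          = -(Matrix.of fun i j => MvPolynomial.eval (fun p => A p.1 p.2) (Q i j)) ∧
        (Matrix.of fun i j => MvPolynomial.eval (fun p => A p.1 p.2) (Q i j)) * A
          = MvPolynomial.eval (fun p => A p.1 p.2) P
              • (1 : Matrix (Fin (2 * m)) (Fin (2 * m)) ℝ) := by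
  obtain ⟨P, Q, hPhom, hQhom, hdet, hQskew, hQY⟩ :=
    exists_pfaffian_skewMvPolynomialX (k := ℝ) (Fintype.card_fin (2 * m))
  refine ⟨P, Q, hPhom, hQhom, fun A hA => ?_⟩
  set ev := eval fun p : Fin (2 * m) × Fin (2 * m) => A p.1 p.2
  have hY := map_eval_skewMvPolynomialX hA
  have hQA : (of fun i j => ev (Q i j)) = Q.map ev := rfl
  refine ⟨?_, ?_, ?_⟩
  · rw [← hY, ← RingHom.mapMatrix_apply, ← RingHom.map_det, hdet, map_pow]
  · rw [hQA, ← transpose_map, hQskew, Matrix.map_neg _ (map_neg ev)]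
  · rw [hQA, ← hY, ← Matrix.map_mul, hQY]
    ext i j
    simp [one_apply, apply_ite ev]

/-- Pfaffian and adjoint Pfaffian: for every `m ≥ 1` there are a polynomial `P`
(homogeneous of degree `m`) and polynomials `Q i j` (homogeneous of degree `m - 1`)
in the entries of a `2m × 2m` matrix such that, for every skew-symmetric `A`:
`det A = P(A)²`, the matrix `Q(A)` is skew-symmetric, and `Q(A) * A = P(A) • Id`. -/
theorem exists_pfaffian_and_adjoint_pfaffian (m : ℕ) (hm : 1 ≤ m) :
    ∃ (P : MvPolynomial (Fin (2 * m) × Fin (2 * m)) ℝ)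
      (Q : Fin (2 * m) → Fin (2 * m) → MvPolynomial (Fin (2 * m) × Fin (2 * m)) ℝ),
      P.IsHomogeneous m ∧
      (∀ i j, (Q i j).IsHomogeneous (m - 1)) ∧
      ∀ A : Matrix (Fin (2 * m)) (Fin (2 * m)) ℝ, Aᵀ = -A →
        A.det = (MvPolynomial.eval (fun p => A p.1 p.2) P) ^ 2 ∧
        (Matrix.of fun i j => MvPolynomial.eval (fun p => A p.1 p.2) (Q i j))ᵀ
          = -(Matrix.of fun i j => MvPolynomial.eval (fun p => A p.1 p.2) (Q i j)) ∧
        (Matrix.of fun i j => MvPolynomial.eval (fun p => A p.1 p.2) (Q i j)) * A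
          = MvPolynomial.eval (fun p => A p.1 p.2) P
              • (1 : Matrix (Fin (2 * m)) (Fin (2 * m)) ℝ) :=
  exists_pfaffian_and_adjoint_pfaffian_general m
end

section
/- Let A ∈ M_k(ℝ) be skew-symmetric of rank 2m₀, written in block form with blocks A₁ ∈ M_{2m₀}(ℝ) (top-left), A₂ ∈ M_{2m₀, k−2m₀}(ℝ) (top-right), −A₂ᵀ (bottom-left) and A₃ ∈ M_{k−2m₀}(ℝ) (bottom-right), where A₁ is invertible. Let p ∈ ℝ with p ≠ 0 and B ∈ M_{2m₀}(ℝ) satisfy B · A₁ = p · Id_{2m₀}. For i = 1, …, k − 2m₀ set v_i = (−B A₂ e_i, p e_i) ∈ ℝ^{2m₀} × ℝ^{k−2m₀}, where e_1, …, e_{k−2m₀} is the canonical basis of ℝ^{k−2m₀}. Then v_1, …, v_{k−2m₀} is a basis of the kernel of A. -/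
open Matrix

/-!
The `v i` are the columns of `N = [[-B A₂], [p • 1]]`. If `A x = 0`, the first block row gives
`A₁ x₁ = -A₂ x₂`, and multiplying by `B` gives `p x₁ = -B A₂ x₂`, that is `x = N (p⁻¹ x₂)`; so
`ker A ⊆ range N`. Since `p ≠ 0`, `N` is injective, so `range N` has dimension `r`, which is also
the dimension of `ker A` by rank–nullity; hence the two are equal.
-/

section

variable {K l n m : Type*} [Field K] [Fintype m]

lemma Matrix.rank_add_finrank_ker_mulVecLin (M : Matrix l m K) :
    M.rank + Module.finrank K (LinearMap.ker M.mulVecLin) = Fintype.card m := by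
  rw [Matrix.rank, LinearMap.finrank_range_add_finrank_ker, Module.finrank_fintype_fun_eq_card]

variable [DecidableEq m]

lemma Matrix.mulVec_fromRows_smul_one_injective (X : Matrix n m K) {p : K} (hp : p ≠ 0) :
    Function.Injective (fromRows X (p • 1 : Matrix m m K)).mulVec := by
  intro y z h
  simpa [smul_mulVec, hp] using congr_arg (· ∘ Sum.inr) h

variable [Fintype n] [DecidableEq n]

lemma Matrix.ker_fromBlocks_le_range_fromRows {A₁ B : Matrix n n K} {A₂ : Matrix n m K}
    {C : Matrix m n K} {D : Matrix m m K} {p : K} (hp : p ≠ 0) (hB : B * A₁ = p • 1) :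
    LinearMap.ker (fromBlocks A₁ A₂ C D).mulVecLin ≤
      LinearMap.range (fromRows (-(B * A₂)) (p • 1 : Matrix m m K)).mulVecLin := by
  intro x hx
  have htop : A₁ *ᵥ (x ∘ Sum.inl) = -(A₂ *ᵥ (x ∘ Sum.inr)) := by
    rw [LinearMap.mem_ker, mulVecLin_apply, fromBlocks_mulVec] at hx
    exact eq_neg_of_add_eq_zero_left (congr_arg (· ∘ Sum.inl) hx)
  have hleft : p • (x ∘ Sum.inl) = -((B * A₂) *ᵥ (x ∘ Sum.inr)) :=
    calc p • (x ∘ Sum.inl) = (B * A₁) *ᵥ (x ∘ Sum.inl) := by rw [hB, smul_mulVec, one_mulVec]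
      _ = -((B * A₂) *ᵥ (x ∘ Sum.inr)) := by
        rw [← mulVec_mulVec, htop, mulVec_neg, mulVec_mulVec]
  refine ⟨p⁻¹ • (x ∘ Sum.inr), ?_⟩
  ext (i | i)
  · simp [neg_mulVec, ← hleft, hp]
  · simp [smul_mulVec, hp]

lemma Matrix.ker_fromBlocks_eq_range_fromRows {A₁ B : Matrix n n K} {A₂ : Matrix n m K}
    {C : Matrix m n K} {D : Matrix m m K} {p : K} (hp : p ≠ 0) (hB : B * A₁ = p • 1)
    (hrank : (fromBlocks A₁ A₂ C D).rank = Fintype.card n) :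
    LinearMap.ker (fromBlocks A₁ A₂ C D).mulVecLin =
      LinearMap.range (fromRows (-(B * A₂)) (p • 1 : Matrix m m K)).mulVecLin := by
  refine Submodule.eq_of_le_of_finrank_le (ker_fromBlocks_le_range_fromRows hp hB) ?_
  have hker := (fromBlocks A₁ A₂ C D).rank_add_finrank_ker_mulVecLin
  rw [hrank, Fintype.card_sum] at hker
  rw [LinearMap.finrank_range_of_inj (mulVec_fromRows_smul_one_injective _ hp),
    Module.finrank_fintype_fun_eq_card]
  omega

end

theorem basis_of_kernel_skew_symmetric_block_general (m₀ r : ℕ)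
    (A₁ : Matrix (Fin (2 * m₀)) (Fin (2 * m₀)) ℝ)
    (A₂ : Matrix (Fin (2 * m₀)) (Fin r) ℝ)
    (A₃ : Matrix (Fin r) (Fin r) ℝ)
    (hrank : (Matrix.fromBlocks A₁ A₂ (-A₂ᵀ) A₃).rank = 2 * m₀)
    (p : ℝ) (hp : p ≠ 0) (B : Matrix (Fin (2 * m₀)) (Fin (2 * m₀)) ℝ)
    (hB : B * A₁ = p • (1 : Matrix (Fin (2 * m₀)) (Fin (2 * m₀)) ℝ))
    (v : Fin r → (Fin (2 * m₀) ⊕ Fin r → ℝ))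
    (hv : ∀ i, v i = Sum.elim (-((B * A₂).mulVec (Pi.single i 1))) (p • (Pi.single i 1 : Fin r → ℝ))) :
    LinearIndependent ℝ v ∧
      Submodule.span ℝ (Set.range v)
        = LinearMap.ker (Matrix.fromBlocks A₁ A₂ (-A₂ᵀ) A₃).mulVecLin := by
  have hcol : v = (fromRows (-(B * A₂)) (p • 1 : Matrix (Fin r) (Fin r) ℝ)).col := by
    funext i
    rw [hv i, ← mulVec_single_one, fromRows_mulVec, neg_mulVec, smul_mulVec, one_mulVec]
  rw [hcol, ← mulVec_injective_iff, ← range_mulVecLin,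
    ker_fromBlocks_eq_range_fromRows hp hB (by rw [hrank, Fintype.card_fin])]
  exact ⟨mulVec_fromRows_smul_one_injective _ hp, rfl⟩

/-- For a skew-symmetric matrix of rank `2m₀` in block form
`A = [[A₁, A₂], [-A₂ᵀ, A₃]]` with `A₁ ∈ M_{2m₀}(ℝ)` invertible, and `B`, `p ≠ 0`
with `B A₁ = p • Id`, the vectors `v i = (-B A₂ eᵢ, p eᵢ)` form a basis of the
kernel of `A`. -/
theorem basis_of_kernel_skew_symmetric_block (m₀ r : ℕ)
    (A₁ : Matrix (Fin (2 * m₀)) (Fin (2 * m₀)) ℝ)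
    (A₂ : Matrix (Fin (2 * m₀)) (Fin r) ℝ)
    (A₃ : Matrix (Fin r) (Fin r) ℝ)
    (hskew : (Matrix.fromBlocks A₁ A₂ (-A₂ᵀ) A₃)ᵀ = -(Matrix.fromBlocks A₁ A₂ (-A₂ᵀ) A₃))
    (hrank : (Matrix.fromBlocks A₁ A₂ (-A₂ᵀ) A₃).rank = 2 * m₀)
    (hA₁ : IsUnit A₁.det)
    (p : ℝ) (hp : p ≠ 0) (B : Matrix (Fin (2 * m₀)) (Fin (2 * m₀)) ℝ)
    (hB : B * A₁ = p • (1 : Matrix (Fin (2 * m₀)) (Fin (2 * m₀)) ℝ))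
    (v : Fin r → (Fin (2 * m₀) ⊕ Fin r → ℝ))
    (hv : ∀ i, v i = Sum.elim (-((B * A₂).mulVec (Pi.single i 1))) (p • (Pi.single i 1 : Fin r → ℝ))) :
    LinearIndependent ℝ v ∧
      Submodule.span ℝ (Set.range v)
        = LinearMap.ker (Matrix.fromBlocks A₁ A₂ (-A₂ᵀ) A₃).mulVecLin :=
  basis_of_kernel_skew_symmetric_block_general m₀ r A₁ A₂ A₃ hrank p hp B hB v hv
end
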